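/- Let φ : ℝ → ℝ be measurable with φ(x) → ∞ as x → ∞. Then there exists a mean-zero f ∈ L^1 of a standard probability space such that for every ergodic invertible measure-preserving transformation T and every measurable g satisfying f(x) = g(Tx) − g(x) a.e., one has ∫_X φ(|g(x)|) dμ = ∞. -/

import Mathlib

/-!
Put `f = H m - 1` on disjoint sets `A m` with `H m * μ (A m) = 2⁻¹ ^ (m + 1)` and `f = -1`
elsewhere, so that `∫ f = 0`; here `H m = 8 * R m` and `φ ≥ m * 2 ^ (m + 1)` beyond `R m`.
If `f = g ∘ T - g` with `T` measure preserving, then `g` never drops by more than `1` along an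
orbit step and jumps by `8 * R m - 1` on `A m`. Compose `g` with a bounded nondecreasing function
that is flat on `[-2R, 2R]` and has slope one up to a cutoff: its increment along `T` integrates
to zero, each point of `A m` gains at least `3 * R m`, and only points with `|g| > R m` can lose
(at most `1`). Hence `3 * R m * μ (A m) ≤ μ {|g| > R m}`, and `∫ φ (|g|) ≥ 3 * m / 8` for all `m`.
-/

open MeasureTheory Filter Topology Set
open scoped ENNReal
open Function

/-- For `2 * R ≤ c`: zero on `[-2R, 2R]`, slope one on `[2R, c]` and `[-c, -2R]`, constant
outside `[-c, c]`. -/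
noncomputable def deadZoneClamp (R c s : ℝ) : ℝ :=
  min c (max (2 * R) s) + min (-(2 * R)) (max (-c) s)

lemma abs_deadZoneClamp_le {R c : ℝ} (hR : 0 ≤ R) (hc : 2 * R ≤ c) (s : ℝ) :
    |deadZoneClamp R c s| ≤ c := by
  unfold deadZoneClamp
  rw [abs_le]
  constructor <;> simp only [min_def, max_def] <;> split_ifs <;> linarith

lemma continuous_deadZoneClamp (R c : ℝ) : Continuous (deadZoneClamp R c) := by
  unfold deadZoneClamp; fun_prop

lemma deadZoneClamp_sub_one_le {R c : ℝ} (hR : 0 ≤ R) (hc : 2 * R ≤ c) (s : ℝ) {t : ℝ}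
    (ht : -1 ≤ t) : deadZoneClamp R c s - 1 ≤ deadZoneClamp R c (s + t) := by
  unfold deadZoneClamp
  simp only [min_def, max_def]
  split_ifs <;> linarith

lemma deadZoneClamp_le_add {R : ℝ} (c : ℝ) (hR : 1 ≤ R) {s t : ℝ} (hs : |s| ≤ R) (ht : -1 ≤ t) :
    deadZoneClamp R c s ≤ deadZoneClamp R c (s + t) := by
  rw [abs_le] at hs
  unfold deadZoneClamp
  simp only [min_def, max_def]
  split_ifs <;> linarith

lemma deadZoneClamp_add_le_add {R c s t : ℝ} (hR : 1 ≤ R) (hs : s ∈ Icc (-c) (c - 8 * R))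
    (ht : 8 * R - 1 ≤ t) : deadZoneClamp R c s + 3 * R ≤ deadZoneClamp R c (s + t) := by
  obtain ⟨hs₁, hs₂⟩ := hs
  unfold deadZoneClamp
  simp only [min_def, max_def]
  split_ifs <;> linarith

lemma indicator_sub_indicator_le_deadZoneClamp {X : Type*} {A : Set X} {g : X → ℝ} {x y : X}
    {R c : ℝ} (hR : 1 ≤ R) (hc : 2 * R ≤ c) (hstep : -1 ≤ g y - g x)
    (hjump : x ∈ A → 8 * R - 1 ≤ g y - g x) :
    (A ∩ g ⁻¹' Icc (-c) (c - 8 * R)).indicator (fun _ => 3 * R) x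
        - {x | R < |g x|}.indicator (fun _ => (1 : ℝ)) x
      ≤ deadZoneClamp R c (g y) - deadZoneClamp R c (g x) := by
  have hgy : g y = g x + (g y - g x) := by ring
  rw [hgy]
  by_cases hW : x ∈ A ∩ g ⁻¹' Icc (-c) (c - 8 * R)
  · have hgain := deadZoneClamp_add_le_add hR hW.2 (hjump hW.1)
    have hE : (0 : ℝ) ≤ {x | R < |g x|}.indicator (fun _ => (1 : ℝ)) x :=
      indicator_nonneg (by simp) x
    rw [indicator_of_mem hW]
    linarith
  · rw [indicator_of_notMem hW]
    by_cases hE : x ∈ {x | R < |g x|}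
    · have hloss := deadZoneClamp_sub_one_le (by linarith) hc (g x) hstep
      rw [indicator_of_mem hE]
      linarith
    · have hflat := deadZoneClamp_le_add c hR (le_of_not_gt hE) hstep
      rw [indicator_of_notMem hE]
      linarith

lemma ProbabilityTheory.continuous_cdf (ν : Measure ℝ) [IsProbabilityMeasure ν]
    [NullSingletonClass ν] : Continuous (cdf ν) := by
  have hmono : Monotone (cdf ν) := monotone_cdf ν
  refine continuous_iff_continuousAt.2 fun x => ?_
  rw [hmono.continuousAt_iff_leftLim_eq_rightLim, StieltjesFunction.rightLim_eq]
  have hjump : (cdf ν).measure {x} = 0 := by rw [measure_cdf, measure_singleton]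
  rw [StieltjesFunction.measure_singleton, ENNReal.ofReal_eq_zero] at hjump
  exact le_antisymm (hmono.leftLim_le le_rfl) (by linarith)

lemma exists_pairwise_disjoint_measure_eq {X : Type*} [MeasurableSpace X] [StandardBorelSpace X]
    (μ : Measure X) [IsProbabilityMeasure μ] [NullSingletonClass μ] {ε : ℕ → ℝ}
    (hε : ∀ m, 0 < ε m) (hsum : Summable ε) (hlt : ∑' m, ε m < 1) :
    ∃ A : ℕ → Set X, (∀ m, MeasurableSet (A m)) ∧ Pairwise (Disjoint on A) ∧
      ∀ m, μ (A m) = ENNReal.ofReal (ε m) := by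
  obtain ⟨ι, hι⟩ := exists_measurableEmbedding_real X
  set ν := μ.map ι
  have : IsProbabilityMeasure ν := Measure.isProbabilityMeasure_map hι.measurable.aemeasurable
  have : NullSingletonClass ν := ⟨fun y => by
    rw [hι.map_apply]
    exact (subsingleton_singleton.preimage hι.injective).measure_zero μ⟩
  set F := ProbabilityTheory.cdf ν
  have hlevel : ∀ q ∈ Ioo (0 : ℝ) 1, ∃ u, F u = q := fun q hq =>
    mem_range_of_exists_le_of_exists_ge (ProbabilityTheory.continuous_cdf ν)
      ((ProbabilityTheory.tendsto_cdf_atBot ν).eventually_le_const hq.1).exists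
      ((ProbabilityTheory.tendsto_cdf_atTop ν).eventually_const_le hq.2).exists
  -- the levels start at `(1 - ∑ ε) / 2` so that they all lie in `(0, 1)`
  set q : ℕ → ℝ := fun m => (1 - ∑' j, ε j) / 2 + ∑ j ∈ Finset.range m, ε j
  have hq : ∀ m, q m ∈ Ioo 0 1 := fun m => by
    have h₀ : 0 ≤ ∑ j ∈ Finset.range m, ε j := Finset.sum_nonneg fun j _ => (hε j).le
    have h₁ := hsum.sum_le_tsum (Finset.range m) fun j _ => (hε j).le
    simp only [q, mem_Ioo]
    constructor <;> linarith
  choose u hu using fun m => hlevel (q m) (hq m)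
  have hqsucc : ∀ m, q (m + 1) = q m + ε m := fun m => by
    simp only [q, Finset.sum_range_succ]; ring
  have humono : Monotone u := monotone_nat_of_le_succ fun m => by
    by_contra! h
    have := F.mono h.le
    rw [hu, hu, hqsucc] at this
    linarith [hε m]
  refine ⟨fun m => ι ⁻¹' Ioc (u m) (u (m + 1)), fun _ => hι.measurable measurableSet_Ioc,
    fun m n hmn => (humono.pairwise_disjoint_on_Ioc_succ hmn).preimage ι, fun m => ?_⟩
  rw [← hι.map_apply]
  change ν _ = _
  rw [← ProbabilityTheory.measure_cdf ν, StieltjesFunction.measure_Ioc, hu, hu,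
    hqsucc, add_sub_cancel_left]

section Coboundary

variable {X : Type*} [MeasurableSpace X] {μ : Measure X} {T : X → X}
  {g : X → ℝ} {A : Set X} {R : ℝ}

lemma MeasureTheory.MeasurePreserving.integral_comp_of_aestronglyMeasurable {Y E : Type*}
    [MeasurableSpace Y] [NormedAddCommGroup E] [NormedSpace ℝ E] {ν : Measure Y} {S : X → Y}
    (hS : MeasurePreserving S μ ν) {u : Y → E} (hu : AEStronglyMeasurable u ν) :
    ∫ x, u (S x) ∂μ = ∫ y, u y ∂ν := by
  rw [← hS.map_eq] at hu
  rw [← integral_map hS.measurable.aemeasurable hu, hS.map_eq]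

lemma mul_measureReal_inter_le [IsFiniteMeasure μ] (hT : MeasurePreserving T μ μ) (hg : Measurable g)
    (hA : MeasurableSet A) (hR : 1 ≤ R) {c : ℝ} (hc : 2 * R ≤ c)
    (hstep : ∀ᵐ x ∂μ, -1 ≤ g (T x) - g x) (hjump : ∀ᵐ x ∂μ, x ∈ A → 8 * R - 1 ≤ g (T x) - g x) :
    3 * R * μ.real (A ∩ g ⁻¹' Icc (-c) (c - 8 * R)) ≤ μ.real {x | R < |g x|} := by
  set W := A ∩ g ⁻¹' Icc (-c) (c - 8 * R)
  set E := {x | R < |g x|}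
  have hWm : MeasurableSet W := hA.inter (hg measurableSet_Icc)
  have hEm : MeasurableSet E := measurableSet_lt measurable_const hg.abs
  have hWi : Integrable (W.indicator fun _ => 3 * R) μ := (integrable_const _).indicator hWm
  have hEi : Integrable (E.indicator (fun _ => (1 : ℝ))) μ := (integrable_const (1 : ℝ)).indicator hEm
  set u := fun x => deadZoneClamp R c (g x)
  have hu : Integrable u μ :=
    .of_bound ((continuous_deadZoneClamp R c).measurable.comp hg).aestronglyMeasurable c
      (ae_of_all _ fun x => abs_deadZoneClamp_le (by linarith) hc (g x))
  have huT : Integrable (fun x => u (T x)) μ := hT.integrable_comp_of_integrable hu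
  have key : ∫ x, (W.indicator (fun _ => 3 * R) x - E.indicator (fun _ => (1 : ℝ)) x) ∂μ ≤ 0 := by
    calc _ ≤ ∫ x, (u (T x) - u x) ∂μ := by
          refine integral_mono_ae (hWi.sub hEi) (huT.sub hu) ?_
          filter_upwards [hstep, hjump] with x hx₁ hx₂
          exact indicator_sub_indicator_le_deadZoneClamp hR hc hx₁ hx₂
      _ = 0 := by
          rw [integral_sub huT hu, hT.integral_comp_of_aestronglyMeasurable hu.1, sub_self]
  rw [integral_sub hWi hEi, integral_indicator_const _ hWm, integral_indicator_const _ hEm] at key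
  simp only [smul_eq_mul, mul_one] at key
  linarith

lemma mul_measureReal_le_measureReal_abs_gt [IsFiniteMeasure μ] (hT : MeasurePreserving T μ μ)
    (hg : Measurable g) (hA : MeasurableSet A) (hR : 1 ≤ R)
    (hstep : ∀ᵐ x ∂μ, -1 ≤ g (T x) - g x) (hjump : ∀ᵐ x ∂μ, x ∈ A → 8 * R - 1 ≤ g (T x) - g x) :
    3 * R * μ.real A ≤ μ.real {x | R < |g x|} := by
  set W : ℕ → Set X := fun k => A ∩ g ⁻¹' Icc (-(k + 8 * R)) (k + 8 * R - 8 * R)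
  have hmono : Monotone W := fun k l hkl => by
    have : (k : ℝ) ≤ l := by exact_mod_cast hkl
    exact inter_subset_inter_right _ (preimage_mono (Icc_subset_Icc (by linarith) (by linarith)))
  have hunion : ⋃ k, W k = A := by
    refine Subset.antisymm (iUnion_subset fun k => inter_subset_left) fun x hx => ?_
    obtain ⟨k, hk⟩ := exists_nat_ge |g x|
    have := abs_le.1 hk
    exact mem_iUnion.2 ⟨k, hx, by
      simp only [mem_preimage, mem_Icc, add_sub_cancel_right]
      constructor <;> linarith⟩
  have hlim : Tendsto (fun k => μ.real (W k)) atTop (𝓝 (μ.real A)) := by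
    have := tendsto_measure_iUnion_atTop (μ := μ) hmono
    rw [hunion] at this
    exact (ENNReal.tendsto_toReal (measure_ne_top μ A)).comp this
  exact le_of_tendsto' (hlim.const_mul (3 * R)) fun k =>
    mul_measureReal_inter_le hT hg hA hR (by linarith [k.cast_nonneg (α := ℝ)]) hstep hjump

lemma ofReal_mul_measure_le_lintegral {g : X → ℝ} (hg : Measurable g) {φ : ℝ → ℝ} {M R : ℝ}
    (hφ : ∀ t, R ≤ t → M ≤ φ t) :
    ENNReal.ofReal M * μ {x | R < |g x|} ≤ ∫⁻ x, ENNReal.ofReal (φ |g x|) ∂μ := by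
  rw [← lintegral_indicator_const (measurableSet_lt measurable_const hg.abs)]
  exact lintegral_mono <| indicator_le fun x hx => ENNReal.ofReal_le_ofReal (hφ _ (le_of_lt hx))

lemma lintegral_ofReal_comp_abs_eq_top [IsFiniteMeasure μ] (hT : MeasurePreserving T μ μ)
    (hg : Measurable g) {A : ℕ → Set X} (hA : ∀ m, MeasurableSet (A m)) {R M : ℕ → ℝ}
    (hR : ∀ m, 1 ≤ R m) (hstep : ∀ᵐ x ∂μ, -1 ≤ g (T x) - g x)
    (hjump : ∀ m, ∀ᵐ x ∂μ, x ∈ A m → 8 * R m - 1 ≤ g (T x) - g x) {φ : ℝ → ℝ}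
    (hφ : ∀ m t, R m ≤ t → M m ≤ φ t)
    (hlarge : Tendsto (fun m => M m * R m * μ.real (A m)) atTop atTop) :
    ∫⁻ x, ENNReal.ofReal (φ |g x|) ∂μ = ⊤ := by
  have hbound : ∀ m, ENNReal.ofReal (3 * (M m * R m * μ.real (A m))) ≤
      ∫⁻ x, ENNReal.ofReal (φ |g x|) ∂μ := fun m => by
    have hR0 : 0 ≤ 3 * R m * μ.real (A m) := mul_nonneg (by linarith [hR m]) measureReal_nonneg
    calc ENNReal.ofReal (3 * (M m * R m * μ.real (A m)))
        = ENNReal.ofReal (M m) * ENNReal.ofReal (3 * R m * μ.real (A m)) := by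
          rw [← ENNReal.ofReal_mul' hR0]; ring_nf
      _ ≤ ENNReal.ofReal (M m) * ENNReal.ofReal (μ.real {x | R m < |g x|}) := by
          gcongr
          exact mul_measureReal_le_measureReal_abs_gt hT hg (hA m) (hR m) hstep (hjump m)
      _ = ENNReal.ofReal (M m) * μ {x | R m < |g x|} := by rw [ofReal_measureReal]
      _ ≤ _ := ofReal_mul_measure_le_lintegral hg (hφ m)
  exact top_unique <| le_of_tendsto'
    (ENNReal.tendsto_ofReal_atTop.comp (hlarge.const_mul_atTop three_pos)) hbound

lemma exists_mean_zero_of_tsum_mul_measure_eq_one [IsProbabilityMeasure μ] {A : ℕ → Set X}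
    (hA : ∀ n, MeasurableSet (A n)) (hdisj : Pairwise (Disjoint on A)) {H : ℕ → ℝ}
    (hH : ∀ n, 0 ≤ H n) (hmass : ∑' n, ENNReal.ofReal (H n) * μ (A n) = 1) :
    ∃ f : X → ℝ, Measurable f ∧ Integrable f μ ∧ ∫ x, f x ∂μ = 0 ∧ (∀ x, -1 ≤ f x) ∧
      ∀ n, ∀ x ∈ A n, f x = H n - 1 := by
  set G : X → ℝ≥0∞ := fun x => ∑' n, (A n).indicator (fun _ => ENNReal.ofReal (H n)) x
  have hGm : Measurable G := .tsum fun n => measurable_const.indicator (hA n)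
  have hGint : ∫⁻ x, G x ∂μ = 1 := by
    rw [lintegral_tsum fun n => (measurable_const.indicator (hA n)).aemeasurable]
    simpa only [lintegral_indicator_const (hA _)] using hmass
  have hGA : ∀ n, ∀ x ∈ A n, G x = ENNReal.ofReal (H n) := fun n x hx => by
    simp only [G]
    rw [tsum_eq_single n fun k hk => indicator_of_notMem (disjoint_right.1 (hdisj hk) hx) _,
      indicator_of_mem hx]
  have hGi : Integrable (fun x => (G x).toReal) μ :=
    integrable_toReal_of_lintegral_ne_top hGm.aemeasurable (by simp [hGint])
  refine ⟨fun x => (G x).toReal - 1, hGm.ennreal_toReal.sub measurable_const,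
    hGi.sub (integrable_const 1), ?_, fun x => by linarith [ENNReal.toReal_nonneg (a := G x)],
    fun n x hx => by dsimp only; rw [hGA n x hx, ENNReal.toReal_ofReal (hH n)]⟩
  rw [integral_sub hGi (integrable_const 1),
    integral_toReal hGm.aemeasurable (ae_lt_top hGm (by simp [hGint])), hGint]
  simp

end Coboundary

lemma exists_mean_zero_with_plateaus {X : Type*} [MeasurableSpace X] [StandardBorelSpace X]
    (μ : Measure X) [IsProbabilityMeasure μ] [NullSingletonClass μ] {H w : ℕ → ℝ}
    (hH : ∀ m, 2 ≤ H m) (hw : ∀ m, 0 < w m) (hwsum : HasSum w 1) :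
    ∃ (f : X → ℝ) (A : ℕ → Set X), Measurable f ∧ Integrable f μ ∧ ∫ x, f x ∂μ = 0 ∧
      (∀ x, -1 ≤ f x) ∧ (∀ m, MeasurableSet (A m)) ∧ (∀ m, ∀ x ∈ A m, f x = H m - 1) ∧
      ∀ m, H m * μ.real (A m) = w m := by
  set ε : ℕ → ℝ := fun m => w m / H m
  have hH0 : ∀ m, 0 < H m := fun m => by linarith [hH m]
  have hε : ∀ m, 0 < ε m := fun m => div_pos (hw m) (hH0 m)
  have hεw : ∀ m, ε m ≤ w m / 2 := fun m =>
    div_le_div_of_nonneg_left (hw m).le two_pos (hH m)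
  have hεsum : Summable ε := .of_nonneg_of_le (fun m => (hε m).le) hεw (hwsum.summable.div_const 2)
  have hεlt : ∑' m, ε m < 1 := by
    have := hεsum.tsum_le_tsum hεw (hwsum.summable.div_const 2)
    rw [tsum_div_const, hwsum.tsum_eq] at this
    linarith
  obtain ⟨A, hA, hdisj, hμA⟩ := exists_pairwise_disjoint_measure_eq μ hε hεsum hεlt
  have hHε : ∀ m, H m * ε m = w m := fun m => mul_div_cancel₀ _ (hH0 m).ne'
  have hmass : ∑' m, ENNReal.ofReal (H m) * μ (A m) = 1 := by
    simp_rw [hμA, ← ENNReal.ofReal_mul (hH0 _).le, hHε]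
    rw [← ENNReal.ofReal_tsum_of_nonneg (fun m => (hw m).le) hwsum.summable, hwsum.tsum_eq,
      ENNReal.ofReal_one]
  obtain ⟨f, hfm, hfi, hf0, hf_ge, hfA⟩ :=
    exists_mean_zero_of_tsum_mul_measure_eq_one hA hdisj (fun m => (hH0 m).le) hmass
  refine ⟨f, A, hfm, hfi, hf0, hf_ge, hA, hfA, fun m => ?_⟩
  rw [measureReal_def, hμA, ENNReal.toReal_ofReal (hε m).le, hHε]

theorem stmt15_general {X : Type*} [MeasurableSpace X] [StandardBorelSpace X]
    (μ : Measure X) [IsProbabilityMeasure μ] [NullSingletonClass μ]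
    (φ : ℝ → ℝ) (hφ : Tendsto φ atTop atTop) :
    ∃ f : X → ℝ, Measurable f ∧ Integrable f μ ∧ ∫ x, f x ∂μ = 0 ∧
      ∀ T : X → X, Ergodic T μ →
        (∃ S : X → X, Measurable S ∧ MeasurePreserving S μ μ ∧
          Function.LeftInverse S T ∧ Function.RightInverse S T) →
        ∀ g : X → ℝ, Measurable g →
          (∀ᵐ x ∂μ, f x = g (T x) - g x) →
          ∫⁻ x, ENNReal.ofReal (φ |g x|) ∂μ = ⊤ := by
  set w : ℕ → ℝ := fun m => 1 / 2 / 2 ^ m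
  have hw : ∀ m, 0 < w m := fun m => by positivity
  have hthreshold : ∀ m : ℕ, ∃ R, 1 ≤ R ∧ ∀ t, R ≤ t → m / w m ≤ φ t := fun m => by
    obtain ⟨a, ha⟩ := eventually_atTop.1 (hφ.eventually_ge_atTop (m / w m))
    exact ⟨max a 1, le_max_right _ _, fun t ht => ha t (le_of_max_le_left ht)⟩
  choose R hR1 hRφ using hthreshold
  obtain ⟨f, A, hfm, hfi, hf0, hf_ge, hA, hfA, hμA⟩ := exists_mean_zero_with_plateaus μ
    (H := fun m => 8 * R m) (fun m => by linarith [hR1 m]) hw (hasSum_geometric_two' 1)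
  refine ⟨f, hfm, hfi, hf0, fun T hT _ g hg hfg => ?_⟩
  refine lintegral_ofReal_comp_abs_eq_top hT.toMeasurePreserving hg hA hR1 ?_ (fun m => ?_) hRφ ?_
  · filter_upwards [hfg] with x hx
    linarith [hf_ge x]
  · filter_upwards [hfg] with x hx hxA
    linarith [hfA m x hxA]
  · have hlin : ∀ m : ℕ, m / w m * R m * μ.real (A m) = m / 8 := fun m => by
      calc m / w m * R m * μ.real (A m) = m / w m * (8 * R m * μ.real (A m)) / 8 := by ring
        _ = m / 8 := by rw [hμA m, div_mul_cancel₀ _ (hw m).ne']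
    simp_rw [hlin]
    exact tendsto_natCast_atTop_atTop.atTop_div_const (by norm_num)

theorem stmt15 {X : Type*} [MeasurableSpace X] [StandardBorelSpace X]
    (μ : Measure X) [IsProbabilityMeasure μ] [NullSingletonClass μ]
    (φ : ℝ → ℝ) (hφm : Measurable φ) (hφ : Tendsto φ atTop atTop) :
    ∃ f : X → ℝ, Measurable f ∧ Integrable f μ ∧ ∫ x, f x ∂μ = 0 ∧
      ∀ T : X → X, Ergodic T μ →
        (∃ S : X → X, Measurable S ∧ MeasurePreserving S μ μ ∧
          Function.LeftInverse S T ∧ Function.RightInverse S T) →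
        ∀ g : X → ℝ, Measurable g →
          (∀ᵐ x ∂μ, f x = g (T x) - g x) →
          ∫⁻ x, ENNReal.ofReal (φ |g x|) ∂μ = ⊤ :=
  stmt15_general μ φ hφ
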